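/- In the polylogarithmic Lie algebra L^PL, for every natural number n one has (ad e1)^n(e12) = (ad e2)^n(e12). -/
import Mathlib


inductive Gamma : Type
  | e1 | e11 | e2 | e22 | e12
deriving DecidableEq

noncomputable section

abbrev FL : Type := FreeLieAlgebra ℚ Gamma

/-- The five generators of the free Lie algebra. -/
def gen (x : Gamma) : FL := FreeLieAlgebra.of ℚ x

/-- The defining relations of the Lie algebra `L`. -/
def relSet : Set FL :=
  {⁅gen .e1, gen .e2⁆, ⁅gen .e11, gen .e2⁆, ⁅gen .e1, gen .e22⁆,
   ⁅gen .e11, gen .e22⁆ - ⁅gen .e2 - gen .e1, gen .e12⁆,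
   (-⁅gen .e11, gen .e12⁆) - ⁅gen .e2 - gen .e1, gen .e12⁆,
   ⁅gen .e22, gen .e12⁆ - ⁅gen .e2 - gen .e1, gen .e12⁆}

/-- The Lie ideal generated by the relations. -/
def relIdeal : LieIdeal ℚ FL := LieSubmodule.lieSpan ℚ FL relSet

/-- The Lie algebra `L`. -/
abbrev Lquot : Type := FL ⧸ relIdeal

/-- Projection `L(Γ) → L`. -/
def mkL : FL → Lquot := LieSubmodule.Quotient.mk (N := relIdeal)

/-- The Lie ideal `N` of `L` generated by `e11`, `e22`, `e12`. -/
def NIdeal : LieIdeal ℚ Lquot :=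
  LieSubmodule.lieSpan ℚ Lquot {mkL (gen .e11), mkL (gen .e22), mkL (gen .e12)}

/-- The Lie ideal `[N, N]`. -/
def NN : LieIdeal ℚ Lquot := ⁅NIdeal, NIdeal⁆

/-- The polylogarithmic Lie algebra `L^PL = L/[N,N]`. -/
abbrev LPL : Type := Lquot ⧸ NN

/-- Projection `L(Γ) → L^PL`. -/
def pl (x : FL) : LPL := LieSubmodule.Quotient.mk (N := NN) (mkL x)

def E1 : LPL := pl (gen .e1)
def E11 : LPL := pl (gen .e11)
def E2 : LPL := pl (gen .e2)
def E22 : LPL := pl (gen .e22)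
def E12 : LPL := pl (gen .e12)

/-- The adjoint action `ad z : w ↦ ⁅z, w⁆` as a linear endomorphism of `L^PL`. -/
def adPL (z : LPL) : Module.End ℚ LPL := LieAlgebra.ad ℚ LPL z

end

lemma mkL_bracket (x y : FL) : mkL ⁅x, y⁆ = ⁅mkL x, mkL y⁆ := rfl

lemma pl_bracket (x y : FL) : pl ⁅x, y⁆ = ⁅pl x, pl y⁆ := rfl

lemma pl_eq_zero_of_mem {x : FL} (h : x ∈ relSet) : pl x = 0 := by
  have h1 : mkL x = 0 :=
    (LieSubmodule.Quotient.mk_eq_zero relIdeal).mpr (LieSubmodule.subset_lieSpan h)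
  show (LieSubmodule.Quotient.mk (N := NN) (mkL x) : LPL) = 0
  rw [h1]
  exact (LieSubmodule.Quotient.mk_eq_zero NN).mpr (LieSubmodule.zero_mem NN)

lemma bE1E2 : ⁅E1, E2⁆ = 0 := by
  rw [show E1 = pl (gen .e1) from rfl, show E2 = pl (gen .e2) from rfl, ← pl_bracket]
  exact pl_eq_zero_of_mem (by simp [relSet])

lemma bE22E12 : ⁅E22, E12⁆ = 0 := by
  have h1 : mkL (gen .e22) ∈ NIdeal := LieSubmodule.subset_lieSpan (by simp)
  have h2 : mkL (gen .e12) ∈ NIdeal := LieSubmodule.subset_lieSpan (by simp)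
  have hm : ⁅mkL (gen .e22), mkL (gen .e12)⁆ ∈ NN := LieSubmodule.lie_mem_lie h1 h2
  show (LieSubmodule.Quotient.mk (N := NN) ⁅mkL (gen .e22), mkL (gen .e12)⁆ : LPL) = 0
  exact (LieSubmodule.Quotient.mk_eq_zero NN).mpr hm

lemma pl_sub (x y : FL) : pl (x - y) = pl x - pl y := by
  show Submodule.Quotient.mk (Submodule.Quotient.mk (x - y) : Lquot) = _
  rw [Submodule.Quotient.mk_sub, Submodule.Quotient.mk_sub]
  rfl

lemma key0 : ⁅E2 - E1, E12⁆ = 0 := by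
  have h : pl (⁅gen .e22, gen .e12⁆ - ⁅gen .e2 - gen .e1, gen .e12⁆) = 0 :=
    pl_eq_zero_of_mem (by simp [relSet])
  rw [pl_sub, sub_eq_zero] at h
  have h2 : pl ⁅gen .e22, gen .e12⁆ = 0 := bE22E12
  have h3 : pl ⁅gen .e2 - gen .e1, gen .e12⁆ = ⁅E2 - E1, E12⁆ := by
    rw [pl_bracket, pl_sub]; rfl
  rw [← h3, ← h, h2]

lemma keyn : ∀ n : ℕ, ⁅E2 - E1, (adPL E2 ^ n) E12⁆ = 0 := by
  intro n
  induction n with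
  | zero => simpa using key0
  | succ n ih =>
    rw [pow_succ']
    have : (adPL E2) ((adPL E2 ^ n) E12) = ⁅E2, (adPL E2 ^ n) E12⁆ := rfl
    simp only [Module.End.mul_apply, this]
    rw [leibniz_lie]
    rw [ih, lie_zero, add_zero]
    have hb : ⁅E2 - E1, E2⁆ = 0 := by
      rw [sub_lie, lie_self, bE1E2]
      simp
    rw [hb, zero_lie]

theorem stmt0 (n : ℕ) : (adPL E1 ^ n) E12 = (adPL E2 ^ n) E12 := by
  induction n with
  | zero => rfl
  | succ n ih =>
    rw [pow_succ', pow_succ', Module.End.mul_apply, Module.End.mul_apply, ih]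
    have h := keyn n
    rw [sub_lie, sub_eq_zero] at h
    exact h.symm
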